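/- arXiv:2503.16216 — 3 statements merged into one kernel-verified Lean document; each statement's English description precedes it below -/
import Mathlib

section
/- In any rooted tree T with k ≥ 3 nodes, consider the assignment where agents are first placed on all nodes at even depth (root at depth 0), then for each non-leaf node at even depth with x > 3 children, ⌈(x-3)/3⌉ of its children additionally receive agents, and for each node at odd depth all of whose considered children are leaves with agents, if it has x > 1 leaf children with agents then ⌊2x/3⌋ of those agents are removed. Then at least ⌈k/3⌉ nodes of T remain without an agent. -/
/-- A rooted tree on `k` nodes: node `0` is the root, and every non-root node
has a parent with a smaller index. -/
structure RTree (k : ℕ) where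
  parent : Fin k → Fin k
  parent_lt : ∀ i : Fin k, (i : ℕ) ≠ 0 → (parent i : ℕ) < (i : ℕ)
  parent_root : ∀ i : Fin k, (i : ℕ) = 0 → parent i = i

namespace RTree

variable {k : ℕ}

/-- Depth of a node (root has depth 0). -/
def depth (T : RTree k) (i : Fin k) : ℕ :=
  if h : (i : ℕ) = 0 then 0 else T.depth (T.parent i) + 1
termination_by (i : ℕ)
decreasing_by exact T.parent_lt i h

/-- The children of a node. -/
def children (T : RTree k) (v : Fin k) : Finset (Fin k) :=
  Finset.univ.filter fun c => T.parent c = v ∧ c ≠ v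

/-- A leaf is a node with no children. -/
def isLeaf (T : RTree k) (v : Fin k) : Prop := T.children v = ∅

instance (T : RTree k) : DecidablePred T.isLeaf := fun v => by
  unfold isLeaf; infer_instance

/-- The undirected graph underlying the rooted tree. -/
def toGraph (T : RTree k) : SimpleGraph (Fin k) :=
  SimpleGraph.fromRel fun a b => T.parent a = b

end RTree

namespace RTree

variable {k : ℕ} (T : RTree k)

lemma mem_children {u v : Fin k} : u ∈ T.children v ↔ T.parent u = v ∧ u ≠ v := by
  simp [children]

lemma child_ne_zero {u v : Fin k} (h : u ∈ T.children v) : (u : ℕ) ≠ 0 := by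
  intro h0
  rcases T.mem_children.1 h with ⟨hp, hne⟩
  have := T.parent_root u h0
  rw [hp] at this
  exact hne this.symm

lemma mem_children_parent {v : Fin k} (h : (v : ℕ) ≠ 0) : v ∈ T.children (T.parent v) := by
  rw [mem_children]
  refine ⟨rfl, fun he => ?_⟩
  have := T.parent_lt v h
  rw [← he] at this
  omega

lemma depth_zero {v : Fin k} (h : (v : ℕ) = 0) : T.depth v = 0 := by
  conv_lhs => rw [depth]
  rw [dif_pos h]

lemma depth_parent {v : Fin k} (h : (v : ℕ) ≠ 0) :
    T.depth v = T.depth (T.parent v) + 1 := by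
  conv_lhs => rw [depth]
  rw [dif_neg h]

lemma depth_child {u v : Fin k} (h : u ∈ T.children v) : T.depth u = T.depth v + 1 := by
  have h0 := T.child_ne_zero h
  have hp := (T.mem_children.1 h).1
  rw [T.depth_parent h0, hp]

lemma not_leaf_of_mem {u v : Fin k} (h : u ∈ T.children v) : ¬ T.isLeaf v := by
  intro hl
  rw [isLeaf] at hl
  rw [hl] at h
  exact absurd h (Finset.notMem_empty u)

lemma root_not_leaf (hk : 3 ≤ k) {v : Fin k} (hv : (v : ℕ) = 0) : ¬ T.isLeaf v := by
  intro hl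
  have h1 : (⟨1, by omega⟩ : Fin k) ∈ T.children v := by
    rw [mem_children]
    constructor
    · have hlt := T.parent_lt ⟨1, by omega⟩ (by simp)
      apply Fin.ext
      simp only at hlt ⊢
      omega
    · intro he
      apply_fun Fin.val at he
      simp [hv] at he
  rw [isLeaf] at hl
  rw [hl] at h1
  exact absurd h1 (Finset.notMem_empty _)

/-- Block representative of a node. -/
def blk (T : RTree k) (v : Fin k) : Fin k :=
  if T.depth v % 2 = 1 then T.parent v
  else if T.isLeaf v then T.parent (T.parent v) else v

lemma blk_odd {v : Fin k} (h : T.depth v % 2 = 1) : T.blk v = T.parent v := by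
  rw [blk, if_pos h]

lemma blk_even_leaf {v : Fin k} (h : T.depth v % 2 = 0) (hl : T.isLeaf v) :
    T.blk v = T.parent (T.parent v) := by
  rw [blk, if_neg (by omega), if_pos hl]

lemma blk_even_nonleaf {v : Fin k} (h : T.depth v % 2 = 0) (hl : ¬ T.isLeaf v) :
    T.blk v = v := by
  rw [blk, if_neg (by omega), if_neg hl]

lemma blk_spec (hk : 3 ≤ k) (v : Fin k) :
    T.depth (T.blk v) % 2 = 0 ∧ ¬ T.isLeaf (T.blk v) := by
  by_cases hodd : T.depth v % 2 = 1
  · rw [T.blk_odd hodd]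
    have hv0 : (v : ℕ) ≠ 0 := by
      intro h0; rw [T.depth_zero h0] at hodd; omega
    have hd := T.depth_parent hv0
    exact ⟨by omega, T.not_leaf_of_mem (T.mem_children_parent hv0)⟩
  · have hev : T.depth v % 2 = 0 := by omega
    by_cases hleaf : T.isLeaf v
    · rw [T.blk_even_leaf hev hleaf]
      have hv0 : (v : ℕ) ≠ 0 := fun h0 => T.root_not_leaf hk h0 hleaf
      have hdv := T.depth_parent hv0
      have hu0 : (T.parent v : ℕ) ≠ 0 := by
        intro h0
        have := T.depth_zero h0
        omega
      have hdu := T.depth_parent hu0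
      exact ⟨by omega, T.not_leaf_of_mem (T.mem_children_parent hu0)⟩
    · rw [T.blk_even_nonleaf hev hleaf]
      exact ⟨hev, hleaf⟩

lemma fiber_eq (hk : 3 ≤ k) {w : Fin k} (hw : T.depth w % 2 = 0) (hwl : ¬ T.isLeaf w) :
    Finset.univ.filter (fun v => T.blk v = w)
      = insert w (T.children w ∪ (T.children w).biUnion
          (fun u => (T.children u).filter (fun c => T.isLeaf c))) := by
  ext v
  simp only [Finset.mem_filter, Finset.mem_univ, true_and, Finset.mem_insert,
    Finset.mem_union, Finset.mem_biUnion, Finset.mem_filter]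
  constructor
  · intro hb
    by_cases hodd : T.depth v % 2 = 1
    · rw [T.blk_odd hodd] at hb
      right; left
      rw [mem_children]
      refine ⟨hb, fun he => ?_⟩
      rw [he] at hodd; omega
    · have hev : T.depth v % 2 = 0 := by omega
      by_cases hleaf : T.isLeaf v
      · rw [T.blk_even_leaf hev hleaf] at hb
        right; right
        have hv0 : (v : ℕ) ≠ 0 := fun h0 => T.root_not_leaf hk h0 hleaf
        have hvc := T.mem_children_parent hv0
        have hdv := T.depth_parent hv0
        have hu0 : (T.parent v : ℕ) ≠ 0 := by
          intro h0
          have hdz := T.depth_zero h0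
          have := T.root_not_leaf hk h0
          -- depth v = 0 + 1 = 1, odd contradiction with hev
          omega
        refine ⟨T.parent v, ?_, hvc, hleaf⟩
        rw [← hb]
        exact T.mem_children_parent hu0
      · rw [T.blk_even_nonleaf hev hleaf] at hb
        left; exact hb
  · rintro (rfl | hC | ⟨u, hu, hv⟩)
    · exact T.blk_even_nonleaf hw hwl
    · have hd := T.depth_child hC
      rw [T.blk_odd (by omega)]
      exact (T.mem_children.1 hC).1
    · obtain ⟨hvc, hleaf⟩ := hv
      have hdu := T.depth_child hu
      have hdv := T.depth_child hvc
      rw [T.blk_even_leaf (by omega) hleaf, (T.mem_children.1 hvc).1,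
        (T.mem_children.1 hu).1]

end RTree

/-- Empty_Node_Selection: agents on all even-depth nodes;
for each even-depth node with `x > 3` children, `⌈(x-3)/3⌉ = (x-1)/3` of its
(odd-depth) children additionally get agents (otherwise none of them do);
for each odd-depth node with `x > 1` leaf children (which are at even depth and
carry agents), `⌊2x/3⌋` of those agents are removed so exactly `⌈x/3⌉ = (x+2)/3`
remain. Then at least `⌈k/3⌉ = (k+2)/3` nodes remain empty. -/
theorem empty_node_selection_leaves_third_empty
    {k : ℕ} (hk : 3 ≤ k) (T : RTree k) (S : Finset (Fin k))
    -- every even-depth non-leaf node keeps its agent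
    (h_even_nonleaf : ∀ v, T.depth v % 2 = 0 → ¬ T.isLeaf v → v ∈ S)
    -- an even-depth leaf whose (odd-depth) parent has at most one leaf child keeps its agent
    (h_even_leaf_single : ∀ v, T.depth v % 2 = 0 → T.isLeaf v → (v : ℕ) ≠ 0 →
      ((T.children (T.parent v)).filter (fun c => T.isLeaf c)).card ≤ 1 → v ∈ S)
    -- occupied (odd-depth) children of an even-depth node w: ⌈(x-3)/3⌉ of them if x > 3, else none
    (h_odd_count : ∀ w, T.depth w % 2 = 0 →
      ((T.children w).filter (fun c => c ∈ S)).card =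
        (if 3 < (T.children w).card then ((T.children w).card - 1) / 3 else 0))
    -- occupied leaf children of an odd-depth node w with x > 1 leaf children: exactly ⌈x/3⌉
    (h_leaf_group : ∀ w, T.depth w % 2 = 1 →
      1 < ((T.children w).filter (fun c => T.isLeaf c)).card →
      (((T.children w).filter (fun c => T.isLeaf c)).filter (fun c => c ∈ S)).card =
        (((T.children w).filter (fun c => T.isLeaf c)).card + 2) / 3) :
    (k + 2) / 3 ≤ k - S.card := by
  classical
  set E : Finset (Fin k) :=
    Finset.univ.filter (fun w => T.depth w % 2 = 0 ∧ ¬ T.isLeaf w) with hE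
  have hfib : ∀ v : Fin k, T.blk v ∈ E := by
    intro v
    rw [hE, Finset.mem_filter]
    exact ⟨Finset.mem_univ _, T.blk_spec hk v⟩
  have hS : S.card = ∑ w ∈ E, (S.filter (fun v => T.blk v = w)).card :=
    Finset.card_eq_sum_card_fiberwise (fun v _ => hfib v)
  have hU : k = ∑ w ∈ E, (Finset.univ.filter (fun v => T.blk v = w)).card := by
    have h := Finset.card_eq_sum_card_fiberwise
      (s := (Finset.univ : Finset (Fin k))) (t := E) (f := fun v => T.blk v)
      (fun v _ => hfib v)
    simpa using h
  have key : ∀ w ∈ E, 3 * (S.filter (fun v => T.blk v = w)).card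
      ≤ 2 * (Finset.univ.filter (fun v => T.blk v = w)).card := by
    intro w hwE
    rw [hE, Finset.mem_filter] at hwE
    obtain ⟨-, hw, hwl⟩ := hwE
    set C := T.children w with hC
    set gl : Fin k → Finset (Fin k) :=
      fun u => (T.children u).filter (fun c => T.isLeaf c) with hgl
    set G := C.biUnion gl with hG
    have hfw := T.fiber_eq hk hw hwl
    -- pieces are disjoint
    have hwC : w ∉ C := by
      intro h
      exact (T.mem_children.1 h).2 rfl
    have hwG : w ∉ G := by
      intro h
      rcases Finset.mem_biUnion.1 h with ⟨u, _, h2⟩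
      exact hwl (Finset.mem_filter.1 h2).2
    have hdisj : Disjoint C G := by
      rw [Finset.disjoint_left]
      intro v hvC hvG
      rcases Finset.mem_biUnion.1 hvG with ⟨u, huC, h2⟩
      have h1 := (T.mem_children.1 hvC).1
      have h3 := (T.mem_children.1 (Finset.mem_filter.1 h2).1).1
      have h4 := (T.mem_children.1 huC).2
      rw [h1] at h3
      exact h4 h3.symm
    have hpd : ∀ u ∈ C, ∀ u' ∈ C, u ≠ u' → Disjoint (gl u) (gl u') := by
      intro u _ u' _ hne
      rw [Finset.disjoint_left]
      intro v h1 h2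
      have e1 := (T.mem_children.1 (Finset.mem_filter.1 h1).1).1
      have e2 := (T.mem_children.1 (Finset.mem_filter.1 h2).1).1
      rw [e1] at e2
      exact hne e2
    -- cardinality of the full fiber
    have hFcard : (Finset.univ.filter (fun v => T.blk v = w)).card
        = 1 + C.card + ∑ u ∈ C, (gl u).card := by
      rw [hfw, Finset.card_insert_of_notMem (by
          rw [Finset.mem_union]; exact fun h => h.elim hwC hwG),
        Finset.card_union_of_disjoint hdisj, hG, Finset.card_biUnion hpd]
      omega
    -- upper bound on the S-fiber
    have hsub : S.filter (fun v => T.blk v = w)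
        ⊆ insert w ((C ∪ G).filter (fun v => v ∈ S)) := by
      intro v hv
      rcases Finset.mem_filter.1 hv with ⟨hvS, hvb⟩
      have hvF : v ∈ Finset.univ.filter (fun v => T.blk v = w) :=
        Finset.mem_filter.2 ⟨Finset.mem_univ _, hvb⟩
      rw [hfw, Finset.mem_insert] at hvF
      rcases hvF with rfl | hvF
      · exact Finset.mem_insert_self _ _
      · exact Finset.mem_insert_of_mem (Finset.mem_filter.2 ⟨hvF, hvS⟩)
    have hScard : (S.filter (fun v => T.blk v = w)).card
        ≤ 1 + (C.filter (fun c => c ∈ S)).card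
          + ∑ u ∈ C, ((gl u).filter (fun c => c ∈ S)).card := by
      calc (S.filter (fun v => T.blk v = w)).card
          ≤ (insert w ((C ∪ G).filter (fun v => v ∈ S))).card :=
            Finset.card_le_card hsub
        _ ≤ ((C ∪ G).filter (fun v => v ∈ S)).card + 1 := Finset.card_insert_le _ _
        _ = ((C.filter (fun v => v ∈ S)) ∪ (G.filter (fun v => v ∈ S))).card + 1 := by
            rw [Finset.filter_union]
        _ ≤ (C.filter (fun v => v ∈ S)).card + (G.filter (fun v => v ∈ S)).card + 1 := by
            have := Finset.card_union_le (C.filter (fun v => v ∈ S))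
              (G.filter (fun v => v ∈ S))
            omega
        _ ≤ 1 + (C.filter (fun c => c ∈ S)).card
            + ∑ u ∈ C, ((gl u).filter (fun c => c ∈ S)).card := by
            have hGS : (G.filter (fun v => v ∈ S)).card
                = ∑ u ∈ C, ((gl u).filter (fun c => c ∈ S)).card := by
              rw [hG, Finset.filter_biUnion, Finset.card_biUnion]
              intro u hu u' hu' hne
              exact (hpd u hu u' hu' hne).mono
                (Finset.filter_subset _ _) (Finset.filter_subset _ _)
            omega
    -- per-child leaf-group bound
    have hsu : ∀ u ∈ C, 3 * ((gl u).filter (fun c => c ∈ S)).card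
        ≤ 2 * (gl u).card + 1 := by
      intro u hu
      have hdu : T.depth u % 2 = 1 := by
        have := T.depth_child hu
        omega
      simp only [hgl]
      by_cases h1 : 1 < ((T.children u).filter (fun c => T.isLeaf c)).card
      · have h2 := h_leaf_group u hdu h1
        omega
      · have h2 : ((((T.children u).filter (fun c => T.isLeaf c))).filter
            (fun c => c ∈ S)).card
            ≤ ((T.children u).filter (fun c => T.isLeaf c)).card :=
          Finset.card_filter_le _ _
        omega
    have hsum : 3 * (∑ u ∈ C, ((gl u).filter (fun c => c ∈ S)).card)
        ≤ 2 * (∑ u ∈ C, (gl u).card) + C.card := by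
      rw [Finset.mul_sum]
      calc ∑ u ∈ C, 3 * ((gl u).filter (fun c => c ∈ S)).card
          ≤ ∑ u ∈ C, (2 * (gl u).card + 1) := Finset.sum_le_sum hsu
        _ = 2 * (∑ u ∈ C, (gl u).card) + C.card := by
            rw [Finset.sum_add_distrib, Finset.sum_const, smul_eq_mul, mul_one,
              Finset.mul_sum]
    have hA := h_odd_count w hw
    rw [← hC] at hA
    have hc1 : 1 ≤ C.card := by
      rcases Finset.eq_empty_or_nonempty C with h | h
      · exact absurd h hwl
      · exact Finset.card_pos.2 h
    -- final arithmetic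
    set a := (C.filter (fun c => c ∈ S)).card with ha
    set t := ∑ u ∈ C, (gl u).card with ht
    set s := ∑ u ∈ C, ((gl u).filter (fun c => c ∈ S)).card with hs
    rw [hFcard]
    by_cases h3c : 3 < C.card
    · rw [if_pos h3c] at hA
      omega
    · rw [if_neg h3c] at hA
      omega
  have h3 : 3 * S.card ≤ 2 * k := by
    have h2 : ∑ w ∈ E, 2 * (Finset.univ.filter (fun v => T.blk v = w)).card
        = 2 * k := by
      rw [← Finset.mul_sum, ← hU]
    calc 3 * S.card = ∑ w ∈ E, 3 * (S.filter (fun v => T.blk v = w)).card := by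
          rw [hS, Finset.mul_sum]
      _ ≤ ∑ w ∈ E, 2 * (Finset.univ.filter (fun v => T.blk v = w)).card :=
          Finset.sum_le_sum key
      _ = 2 * k := h2
  have hSk : S.card ≤ k := by
    have := Finset.card_le_univ S
    simpa using this
  omega
end

section
/- Let T be a rooted tree where agents are assigned by Empty_Node_Selection. Then the empty nodes of T can be partitioned into groups, each group assigned to a distinct occupied node (its covering settler), such that each group consists of either at most 3 empty children of the settler's node or at most 2 empty siblings of the settler's node, and consequently each settler's round-robin covering walk has length at most 6. -/
namespace ENSProof

def dup2 {α : Type*} (l : List α) : List α := l.flatMap fun x => [x, x]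

lemma dup2_mem {α : Type*} {l : List α} {u : α} : u ∈ dup2 l ↔ u ∈ l := by
  simp [dup2]

lemma dup2_length {α : Type*} (l : List α) : (dup2 l).length = 2 * l.length := by
  induction l with
  | nil => rfl
  | cons a t ih => simp only [dup2, List.flatMap_cons, List.length_append] at *; simp [ih]; omega

lemma dup2_count {α : Type*} [DecidableEq α] (l : List α) (u : α) :
    (dup2 l).count u = 2 * l.count u := by
  induction l with
  | nil => rfl
  | cons a t ih =>
    simp only [dup2, List.flatMap_cons, List.count_append, List.count_cons] at *
    simp [ih, List.count_cons]
    split <;> omega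

lemma toList_count {α : Type*} [DecidableEq α] (s : Finset α) (u : α) :
    s.toList.count u = if u ∈ s then 1 else 0 := by
  split
  · exact List.count_eq_one_of_mem s.nodup_toList (by simpa)
  · exact List.count_eq_zero.mpr (by simpa [Finset.mem_toList] using ‹u ∉ s›)

lemma assign {α : Type*} [DecidableEq α] (ts : List α) (d : α) :
    ∀ (E : Finset α), E.card ≤ ts.length →
    ∃ f : α → α, (∀ v ∈ E, f v ∈ ts) ∧ ∀ u, (E.filter fun v => f v = u).card ≤ ts.count u := by
  induction ts with
  | nil =>
    intro E hle
    have hE : E = ∅ := Finset.card_eq_zero.mp (Nat.le_zero.mp hle)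
    subst hE
    exact ⟨fun _ => d, by simp, by simp⟩
  | cons a ts ih =>
    intro E hle
    rcases E.eq_empty_or_nonempty with h | ⟨e, he⟩
    · subst h; exact ⟨fun _ => d, by simp, by simp⟩
    · obtain ⟨f', hmem, hfib⟩ := ih (E.erase e) (by
        have h1 := Finset.card_erase_of_mem he
        have h2 : 1 ≤ E.card := Finset.card_pos.mpr ⟨e, he⟩
        simp only [List.length_cons] at hle
        omega)
      refine ⟨fun v => if v = e then a else f' v, ?_, ?_⟩
      · intro v hv
        by_cases hve : v = e
        · simp [hve]
        · simp only [hve, if_false, List.mem_cons]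
          exact Or.inr (hmem v (Finset.mem_erase.mpr ⟨hve, hv⟩))
      · intro u
        rw [List.count_cons]
        by_cases hau : a = u
        · subst hau
          have hsub : (E.filter fun v => (if v = e then a else f' v) = a) ⊆
              insert e ((E.erase e).filter fun v => f' v = a) := by
            intro v hv
            simp only [Finset.mem_filter] at hv
            by_cases hve : v = e
            · simp [hve]
            · exact Finset.mem_insert.mpr (Or.inr (Finset.mem_filter.mpr
                ⟨Finset.mem_erase.mpr ⟨hve, hv.1⟩, by simpa [hve] using hv.2⟩))
          have := Finset.card_le_card hsub
          have := Finset.card_insert_le e ((E.erase e).filter fun v => f' v = a)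
          have := hfib a
          simp only [beq_self_eq_true, if_pos]
          omega
        · have hsub : (E.filter fun v => (if v = e then a else f' v) = u) ⊆
              ((E.erase e).filter fun v => f' v = u) := by
            intro v hv
            simp only [Finset.mem_filter] at hv
            by_cases hve : v = e
            · exfalso; rw [hve] at hv; simp at hv; exact hau hv.2
            · exact Finset.mem_filter.mpr
                ⟨Finset.mem_erase.mpr ⟨hve, hv.1⟩, by simpa [hve] using hv.2⟩
          have := Finset.card_le_card hsub
          have := hfib u
          have hne : (a == u) = false := beq_eq_false_iff_ne.mpr hau
          simp only [hne, if_false]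
          omega

end ENSProof

namespace ENSProof

variable {k : ℕ}

def StO (T : RTree k) (S : Finset (Fin k)) (w : Fin k) : Finset (Fin k) :=
  (T.children w).filter (fun c => c ∈ S)

def EmpO (T : RTree k) (S : Finset (Fin k)) (w : Fin k) : Finset (Fin k) :=
  (T.children w).filter (fun c => c ∉ S)

noncomputable def tsO (T : RTree k) (S : Finset (Fin k)) (w : Fin k) : List (Fin k) :=
  w :: w :: w :: dup2 (StO T S w).toList

def leafCh (T : RTree k) (w : Fin k) : Finset (Fin k) :=
  (T.children w).filter (fun c => T.isLeaf c)

def StL (T : RTree k) (S : Finset (Fin k)) (w : Fin k) : Finset (Fin k) :=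
  (leafCh T w).filter (fun c => c ∈ S)

def EmpL (T : RTree k) (S : Finset (Fin k)) (w : Fin k) : Finset (Fin k) :=
  (leafCh T w).filter (fun c => c ∉ S)

noncomputable def tsL (T : RTree k) (S : Finset (Fin k)) (w : Fin k) : List (Fin k) :=
  dup2 (StL T S w).toList

lemma mem_children' {T : RTree k} {c w : Fin k} :
    c ∈ T.children w ↔ T.parent c = w ∧ c ≠ w := by
  simp [RTree.children]

lemma not_mem_children_self (T : RTree k) (w : Fin k) : w ∉ T.children w := by
  simp [mem_children']

lemma mem_tsO {T : RTree k} {S : Finset (Fin k)} {u w : Fin k} :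
    u ∈ tsO T S w ↔ u = w ∨ u ∈ StO T S w := by
  simp [tsO, dup2_mem, Finset.mem_toList, or_assoc]

lemma mem_tsL {T : RTree k} {S : Finset (Fin k)} {u w : Fin k} :
    u ∈ tsL T S w ↔ u ∈ StL T S w := by
  simp [tsL, dup2_mem, Finset.mem_toList]

lemma length_tsO (T : RTree k) (S : Finset (Fin k)) (w : Fin k) :
    (tsO T S w).length = 3 + 2 * (StO T S w).card := by
  simp [tsO, dup2_length, Finset.length_toList]; ring

lemma length_tsL (T : RTree k) (S : Finset (Fin k)) (w : Fin k) :
    (tsL T S w).length = 2 * (StL T S w).card := by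
  simp [tsL, dup2_length, Finset.length_toList]

lemma count_tsO (T : RTree k) (S : Finset (Fin k)) (u w : Fin k) :
    (tsO T S w).count u =
      (if u = w then 3 else 0) + 2 * (if u ∈ StO T S w then 1 else 0) := by
  simp only [tsO, List.count_cons, dup2_count, toList_count]
  by_cases h : u = w
  · subst h
    have hns : u ∉ StO T S u := by
      intro hm
      exact not_mem_children_self T u (Finset.mem_filter.mp hm).1
    simp [hns]
  · have hb : (w == u) = false := beq_eq_false_iff_ne.mpr (Ne.symm h)
    simp [h, hb]

lemma count_tsL (T : RTree k) (S : Finset (Fin k)) (u w : Fin k) :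
    (tsL T S w).count u = 2 * (if u ∈ StL T S w then 1 else 0) := by
  simp only [tsL, dup2_count, toList_count]

lemma card_split (T : RTree k) (S : Finset (Fin k)) (w : Fin k) :
    (StO T S w).card + (EmpO T S w).card = (T.children w).card :=
  Finset.card_filter_add_card_filter_not (fun c => c ∈ S)

lemma card_splitL (T : RTree k) (S : Finset (Fin k)) (w : Fin k) :
    (StL T S w).card + (EmpL T S w).card = (leafCh T w).card :=
  Finset.card_filter_add_card_filter_not (fun c => c ∈ S)

lemma depth_succ (T : RTree k) (v : Fin k) (h : (v : ℕ) ≠ 0) :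
    T.depth v = T.depth (T.parent v) + 1 := by
  rw [RTree.depth]; simp [h]

lemma depth_ne_zero_val (T : RTree k) (v : Fin k) (h : T.depth v ≠ 0) : (v : ℕ) ≠ 0 := by
  intro hv
  rw [RTree.depth] at h
  simp [hv] at h

end ENSProof

open ENSProof

/-- Under the Empty_Node_Selection assignment, the empty nodes can
be partitioned into groups, each assigned to a distinct occupied node (covering
settler), where each group consists of either at most 3 empty children of the
settler's node, or at most 2 empty siblings of the settler's node; consequently the
settler's round-robin covering walk has length at most 6 edge traversals
(`2·|group|` in the children case, `2 + 2·|group|` in the sibling case). -/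
theorem empty_node_selection_covering_groups
    {k : ℕ} (hk : 3 ≤ k) (T : RTree k) (S : Finset (Fin k))
    (h_even_nonleaf : ∀ v, T.depth v % 2 = 0 → ¬ T.isLeaf v → v ∈ S)
    (h_even_leaf_single : ∀ v, T.depth v % 2 = 0 → T.isLeaf v → (v : ℕ) ≠ 0 →
      ((T.children (T.parent v)).filter (fun c => T.isLeaf c)).card ≤ 1 → v ∈ S)
    (h_odd_count : ∀ w, T.depth w % 2 = 0 →
      ((T.children w).filter (fun c => c ∈ S)).card =
        (if 3 < (T.children w).card then ((T.children w).card - 1) / 3 else 0))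
    (h_leaf_group : ∀ w, T.depth w % 2 = 1 →
      1 < ((T.children w).filter (fun c => T.isLeaf c)).card →
      (((T.children w).filter (fun c => T.isLeaf c)).filter (fun c => c ∈ S)).card =
        (((T.children w).filter (fun c => T.isLeaf c)).card + 2) / 3) :
    ∃ cover : Fin k → Fin k,
      (∀ v, v ∉ S → cover v ∈ S) ∧
      ∀ u ∈ S,
        -- the group assigned to settler u
        (((Finset.univ.filter fun v : Fin k => v ∉ S ∧ cover v = u)).card ≤ 3 ∧
          (∀ v, v ∉ S → cover v = u → T.parent v = u) ∧
          2 * ((Finset.univ.filter fun v : Fin k => v ∉ S ∧ cover v = u)).card ≤ 6) ∨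
        (((Finset.univ.filter fun v : Fin k => v ∉ S ∧ cover v = u)).card ≤ 2 ∧
          (∀ v, v ∉ S → cover v = u → T.parent v = T.parent u ∧ v ≠ u) ∧
          2 + 2 * ((Finset.univ.filter fun v : Fin k => v ∉ S ∧ cover v = u)).card ≤ 6) := by
  classical
  have hzk : 0 < k := by omega
  -- the root
  have hrchild : (⟨1, by omega⟩ : Fin k) ∈ T.children ⟨0, hzk⟩ := by
    rw [mem_children']
    constructor
    · have h1 := T.parent_lt ⟨1, by omega⟩ (by simp)
      apply Fin.ext
      simp only [Fin.val_mk] at h1 ⊢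
      omega
    · intro h
      have := congrArg Fin.val h
      simp at this
  have hrS : (⟨0, hzk⟩ : Fin k) ∈ S := by
    apply h_even_nonleaf
    · rw [RTree.depth]; simp
    · intro hleaf
      rw [RTree.isLeaf] at hleaf
      rw [hleaf] at hrchild
      exact absurd hrchild (Finset.notMem_empty _)
  have hval0 : ∀ v : Fin k, (v : ℕ) = 0 → v ∈ S := by
    intro v hv
    have : v = ⟨0, hzk⟩ := Fin.ext (by simpa using hv)
    rw [this]; exact hrS
  have hchild : ∀ v : Fin k, (v : ℕ) ≠ 0 → v ∈ T.children (T.parent v) := by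
    intro v hv
    rw [mem_children']
    refine ⟨rfl, ?_⟩
    intro h
    have := T.parent_lt v hv
    rw [← h] at this
    omega
  have hchild_ne0 : ∀ {c w : Fin k}, c ∈ T.children w → (c : ℕ) ≠ 0 := by
    intro c w hc h0
    rw [mem_children'] at hc
    have hp := T.parent_root c h0
    exact hc.2 (by rw [← hp, hc.1])
  have hStO : ∀ {u w : Fin k}, u ∈ StO T S w →
      T.parent u = w ∧ u ∈ S ∧ T.depth u = T.depth w + 1 := by
    intro u w hu
    have h1 := Finset.mem_filter.mp hu
    have h2 := mem_children'.mp h1.1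
    have h0 : (u : ℕ) ≠ 0 := hchild_ne0 h1.1
    exact ⟨h2.1, h1.2, by rw [depth_succ T u h0, h2.1]⟩
  have hStL : ∀ {u w : Fin k}, u ∈ StL T S w →
      T.parent u = w ∧ u ∈ S ∧ T.isLeaf u ∧ T.depth u = T.depth w + 1 := by
    intro u w hu
    have h1 := Finset.mem_filter.mp hu
    have h1' := Finset.mem_filter.mp h1.1
    have h2 := mem_children'.mp h1'.1
    have h0 : (u : ℕ) ≠ 0 := hchild_ne0 h1'.1
    exact ⟨h2.1, h1.2, h1'.2, by rw [depth_succ T u h0, h2.1]⟩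
  -- odd-depth empty nodes
  have hOddv : ∀ v : Fin k, v ∉ S → T.depth v % 2 = 1 →
      T.depth (T.parent v) % 2 = 0 ∧ T.parent v ∈ S ∧ v ∈ EmpO T S (T.parent v) ∧
      (EmpO T S (T.parent v)).card ≤ (tsO T S (T.parent v)).length := by
    intro v hvS hodd
    have hv0 : (v : ℕ) ≠ 0 := depth_ne_zero_val T v (by omega)
    have hvc := hchild v hv0
    have hd := depth_succ T v hv0
    have hwpar : T.depth (T.parent v) % 2 = 0 := by omega
    have hwS : T.parent v ∈ S := by
      apply h_even_nonleaf _ hwpar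
      intro hleaf
      rw [RTree.isLeaf] at hleaf
      rw [hleaf] at hvc
      exact absurd hvc (Finset.notMem_empty _)
    refine ⟨hwpar, hwS, Finset.mem_filter.mpr ⟨hvc, hvS⟩, ?_⟩
    have hcount : (StO T S (T.parent v)).card =
        (if 3 < (T.children (T.parent v)).card
          then ((T.children (T.parent v)).card - 1) / 3 else 0) :=
      h_odd_count (T.parent v) hwpar
    have hsplit := card_split T S (T.parent v)
    rw [length_tsO]
    by_cases h3 : 3 < (T.children (T.parent v)).card
    · rw [if_pos h3] at hcount; omega
    · rw [if_neg h3] at hcount; omega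
  -- even-depth empty nodes
  have hEvenv : ∀ v : Fin k, v ∉ S → T.depth v % 2 = 0 →
      T.depth (T.parent v) % 2 = 1 ∧ v ∈ EmpL T S (T.parent v) ∧
      (EmpL T S (T.parent v)).card ≤ (tsL T S (T.parent v)).length := by
    intro v hvS heven
    have hv0 : (v : ℕ) ≠ 0 := fun h0 => hvS (hval0 v h0)
    have hd := depth_succ T v hv0
    have hvd : T.depth v ≠ 0 := by omega
    have hwodd : T.depth (T.parent v) % 2 = 1 := by omega
    have hvleaf : T.isLeaf v := by
      by_contra hnl
      exact hvS (h_even_nonleaf v heven hnl)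
    have hL : 1 < (leafCh T (T.parent v)).card := by
      by_contra hle
      exact hvS (h_even_leaf_single v heven hvleaf hv0 (Nat.le_of_not_lt hle))
    have hcount : (StL T S (T.parent v)).card = ((leafCh T (T.parent v)).card + 2) / 3 :=
      h_leaf_group (T.parent v) hwodd hL
    have hsplit := card_splitL T S (T.parent v)
    refine ⟨hwodd, Finset.mem_filter.mpr ⟨Finset.mem_filter.mpr ⟨hchild v hv0, hvleaf⟩, hvS⟩, ?_⟩
    rw [length_tsL]
    omega
  -- choose the local assignment functions
  have hFO : ∀ w : Fin k, ∃ f : Fin k → Fin k,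
      (EmpO T S w).card ≤ (tsO T S w).length →
      (∀ v ∈ EmpO T S w, f v ∈ tsO T S w) ∧
      ∀ u, ((EmpO T S w).filter fun v => f v = u).card ≤ (tsO T S w).count u := by
    intro w
    by_cases h : (EmpO T S w).card ≤ (tsO T S w).length
    · obtain ⟨f, h1, h2⟩ := assign (tsO T S w) w (EmpO T S w) h
      exact ⟨f, fun _ => ⟨h1, h2⟩⟩
    · exact ⟨id, fun h' => absurd h' h⟩
  choose fO hfO using hFO
  have hFE : ∀ w : Fin k, ∃ f : Fin k → Fin k,
      (EmpL T S w).card ≤ (tsL T S w).length →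
      (∀ v ∈ EmpL T S w, f v ∈ tsL T S w) ∧
      ∀ u, ((EmpL T S w).filter fun v => f v = u).card ≤ (tsL T S w).count u := by
    intro w
    by_cases h : (EmpL T S w).card ≤ (tsL T S w).length
    · obtain ⟨f, h1, h2⟩ := assign (tsL T S w) w (EmpL T S w) h
      exact ⟨f, fun _ => ⟨h1, h2⟩⟩
    · exact ⟨id, fun h' => absurd h' h⟩
  choose fE hfE using hFE
  obtain ⟨cov, hcovdef⟩ : ∃ cov : Fin k → Fin k, ∀ v, cov v =
      if v ∈ S then v else
        if T.depth v % 2 = 1 then fO (T.parent v) v else fE (T.parent v) v :=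
    ⟨_, fun _ => rfl⟩
  have hcovO : ∀ v, v ∉ S → T.depth v % 2 = 1 → cov v = fO (T.parent v) v := by
    intro v h1 h2
    rw [hcovdef v, if_neg h1, if_pos h2]
  have hcovE : ∀ v, v ∉ S → T.depth v % 2 = 0 → cov v = fE (T.parent v) v := by
    intro v h1 h2
    rw [hcovdef v, if_neg h1, if_neg (by omega)]
  -- the dichotomy for covered nodes
  have hmain : ∀ v : Fin k, v ∉ S → ∀ u : Fin k, cov v = u →
      (T.depth v % 2 = 1 ∧ (u = T.parent v ∨ u ∈ StO T S (T.parent v))) ∨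
      (T.depth v % 2 = 0 ∧ u ∈ StL T S (T.parent v)) := by
    intro v hvS u hcv
    rcases Nat.mod_two_eq_zero_or_one (T.depth v) with hpar | hpar
    · right
      refine ⟨hpar, ?_⟩
      obtain ⟨-, hvmem, hcard⟩ := hEvenv v hvS hpar
      have hm := (hfE (T.parent v) hcard).1 v hvmem
      rw [← hcovE v hvS hpar, hcv] at hm
      exact mem_tsL.mp hm
    · left
      refine ⟨hpar, ?_⟩
      obtain ⟨-, -, hvmem, hcard⟩ := hOddv v hvS hpar
      have hm := (hfO (T.parent v) hcard).1 v hvmem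
      rw [← hcovO v hvS hpar, hcv] at hm
      exact mem_tsO.mp hm
  refine ⟨cov, ?_, ?_⟩
  · -- cover maps empties into S
    intro v hvS
    rcases Nat.mod_two_eq_zero_or_one (T.depth v) with hpar | hpar
    · obtain ⟨-, hvmem, hcard⟩ := hEvenv v hvS hpar
      have hm := (hfE (T.parent v) hcard).1 v hvmem
      rw [← hcovE v hvS hpar] at hm
      exact (hStL (mem_tsL.mp hm)).2.1
    · obtain ⟨-, hwS, hvmem, hcard⟩ := hOddv v hvS hpar
      have hm := (hfO (T.parent v) hcard).1 v hvmem
      rw [← hcovO v hvS hpar] at hm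
      rcases mem_tsO.mp hm with h | h
      · rw [h]; exact hwS
      · exact (hStO h).2.1
  · intro u huS
    rcases Nat.mod_two_eq_zero_or_one (T.depth u) with hue | huo
    · by_cases hul : T.isLeaf u
      · -- u is an even-depth leaf settler: sibling group
        right
        have hGv : ∀ v, v ∉ S → cov v = u →
            T.depth v % 2 = 0 ∧ u ∈ StL T S (T.parent v) := by
          intro v hvS hcv
          rcases hmain v hvS u hcv with ⟨hodd, hc⟩ | ⟨heven, hc⟩
          · exfalso
            rcases hc with rfl | hc
            · have hv0 : (v : ℕ) ≠ 0 := depth_ne_zero_val T v (by omega)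
              have hm := hchild v hv0
              rw [RTree.isLeaf] at hul
              rw [hul] at hm
              exact absurd hm (Finset.notMem_empty _)
            · obtain ⟨hw0, -, -, -⟩ := hOddv v hvS hodd
              have hdu := (hStO hc).2.2
              omega
          · exact ⟨heven, hc⟩
        have hsib : ∀ v, v ∉ S → cov v = u → T.parent v = T.parent u ∧ v ≠ u := by
          intro v hvS hcv
          obtain ⟨-, hc⟩ := hGv v hvS hcv
          exact ⟨(hStL hc).1.symm, fun h => hvS (h ▸ huS)⟩
        have hGsub : (Finset.univ.filter fun v : Fin k => v ∉ S ∧ cov v = u) ⊆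
            (EmpL T S (T.parent u)).filter fun v => fE (T.parent u) v = u := by
          intro v hv
          rw [Finset.mem_filter] at hv
          obtain ⟨hvS, hcv⟩ := hv.2
          obtain ⟨heven, hc⟩ := hGv v hvS hcv
          have hpp : T.parent v = T.parent u := (hStL hc).1.symm
          obtain ⟨-, hvmem, -⟩ := hEvenv v hvS heven
          rw [hpp] at hvmem
          refine Finset.mem_filter.mpr ⟨hvmem, ?_⟩
          rw [← hpp, ← hcovE v hvS heven]
          exact hcv
        have hcard : (Finset.univ.filter fun v : Fin k => v ∉ S ∧ cov v = u).card ≤ 2 := by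
          rcases Finset.eq_empty_or_nonempty
              (Finset.univ.filter fun v : Fin k => v ∉ S ∧ cov v = u) with hG | ⟨v₀, hv₀⟩
          · rw [hG]; simp
          · rw [Finset.mem_filter] at hv₀
            obtain ⟨heven, hc⟩ := hGv v₀ hv₀.2.1 hv₀.2.2
            have hpp : T.parent v₀ = T.parent u := (hStL hc).1.symm
            obtain ⟨-, -, hcond⟩ := hEvenv v₀ hv₀.2.1 heven
            rw [hpp] at hcond hc
            have hfib := (hfE (T.parent u) hcond).2 u
            have hcnt := count_tsL T S u (T.parent u)
            rw [if_pos hc] at hcnt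
            have := Finset.card_le_card hGsub
            omega
        exact ⟨hcard, hsib, by omega⟩
      · -- u is an even-depth non-leaf settler: children group
        left
        have hGv : ∀ v, v ∉ S → cov v = u →
            T.depth v % 2 = 1 ∧ u = T.parent v := by
          intro v hvS hcv
          rcases hmain v hvS u hcv with ⟨hodd, hc⟩ | ⟨heven, hc⟩
          · rcases hc with rfl | hc
            · exact ⟨hodd, rfl⟩
            · exfalso
              obtain ⟨hw0, -, -, -⟩ := hOddv v hvS hodd
              have hdu := (hStO hc).2.2
              omega
          · exact absurd (hStL hc).2.2.1 hul
        have hpar : ∀ v, v ∉ S → cov v = u → T.parent v = u := by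
          intro v hvS hcv
          exact ((hGv v hvS hcv).2).symm
        have hGsub : (Finset.univ.filter fun v : Fin k => v ∉ S ∧ cov v = u) ⊆
            (EmpO T S u).filter fun v => fO u v = u := by
          intro v hv
          rw [Finset.mem_filter] at hv
          obtain ⟨hvS, hcv⟩ := hv.2
          obtain ⟨hodd, hpu⟩ := hGv v hvS hcv
          obtain ⟨-, -, hvmem, -⟩ := hOddv v hvS hodd
          rw [← hpu] at hvmem
          refine Finset.mem_filter.mpr ⟨hvmem, ?_⟩
          conv_lhs => rw [hpu]
          rw [← hcovO v hvS hodd]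
          exact hcv
        have hcard : (Finset.univ.filter fun v : Fin k => v ∉ S ∧ cov v = u).card ≤ 3 := by
          rcases Finset.eq_empty_or_nonempty
              (Finset.univ.filter fun v : Fin k => v ∉ S ∧ cov v = u) with hG | ⟨v₀, hv₀⟩
          · rw [hG]; simp
          · rw [Finset.mem_filter] at hv₀
            obtain ⟨hodd, hpu⟩ := hGv v₀ hv₀.2.1 hv₀.2.2
            obtain ⟨-, -, -, hcond⟩ := hOddv v₀ hv₀.2.1 hodd
            rw [← hpu] at hcond
            have hfib := (hfO u hcond).2 u
            have hcnt := count_tsO T S u u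
            have hns : u ∉ StO T S u := fun hm =>
              not_mem_children_self T u (Finset.mem_filter.mp hm).1
            rw [if_pos rfl, if_neg hns] at hcnt
            have := Finset.card_le_card hGsub
            omega
        exact ⟨hcard, hpar, by omega⟩
    · -- u is an odd-depth settler: sibling group
      right
      have hGv : ∀ v, v ∉ S → cov v = u →
          T.depth v % 2 = 1 ∧ u ∈ StO T S (T.parent v) := by
        intro v hvS hcv
        rcases hmain v hvS u hcv with ⟨hodd, hc⟩ | ⟨heven, hc⟩
        · rcases hc with rfl | hc
          · exfalso
            obtain ⟨hw0, -, -, -⟩ := hOddv v hvS hodd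
            omega
          · exact ⟨hodd, hc⟩
        · exfalso
          obtain ⟨hw1, -, -⟩ := hEvenv v hvS heven
          have hdu := (hStL hc).2.2.2
          omega
      have hsib : ∀ v, v ∉ S → cov v = u → T.parent v = T.parent u ∧ v ≠ u := by
        intro v hvS hcv
        obtain ⟨-, hc⟩ := hGv v hvS hcv
        exact ⟨(hStO hc).1.symm, fun h => hvS (h ▸ huS)⟩
      have hGsub : (Finset.univ.filter fun v : Fin k => v ∉ S ∧ cov v = u) ⊆
          (EmpO T S (T.parent u)).filter fun v => fO (T.parent u) v = u := by
        intro v hv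
        rw [Finset.mem_filter] at hv
        obtain ⟨hvS, hcv⟩ := hv.2
        obtain ⟨hodd, hc⟩ := hGv v hvS hcv
        have hpp : T.parent v = T.parent u := (hStO hc).1.symm
        obtain ⟨-, -, hvmem, -⟩ := hOddv v hvS hodd
        rw [hpp] at hvmem
        refine Finset.mem_filter.mpr ⟨hvmem, ?_⟩
        rw [← hpp, ← hcovO v hvS hodd]
        exact hcv
      have hcard : (Finset.univ.filter fun v : Fin k => v ∉ S ∧ cov v = u).card ≤ 2 := by
        rcases Finset.eq_empty_or_nonempty
            (Finset.univ.filter fun v : Fin k => v ∉ S ∧ cov v = u) with hG | ⟨v₀, hv₀⟩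
        · rw [hG]; simp
        · rw [Finset.mem_filter] at hv₀
          obtain ⟨hodd, hc⟩ := hGv v₀ hv₀.2.1 hv₀.2.2
          have hpp : T.parent v₀ = T.parent u := (hStO hc).1.symm
          obtain ⟨-, -, -, hcond⟩ := hOddv v₀ hv₀.2.1 hodd
          rw [hpp] at hcond hc
          have hfib := (hfO (T.parent u) hcond).2 u
          have hcnt := count_tsO T S u (T.parent u)
          have hne : u ≠ T.parent u := (mem_children'.mp (Finset.mem_filter.mp hc).1).2
          rw [if_neg hne, if_pos hc] at hcnt
          have := Finset.card_le_card hGsub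
          omega
      exact ⟨hcard, hsib, by omega⟩
end

section
/- Under the Empty_Node_Selection assignment on a rooted tree T, an agent settled at node w must oscillate (i.e., its covering group is nonempty) if and only if one of the following holds: (a) w is a non-leaf node at even depth; (b) w is a leaf at even depth with at least one empty sibling leaf not covered by another agent; (c) w is a leaf at odd depth with at least one empty sibling leaf not covered by another agent. -/
lemma RTree.depth_succ {k : ℕ} (T : RTree k) (i : Fin k) (h : (i : ℕ) ≠ 0) :
    T.depth i = T.depth (T.parent i) + 1 := by
  rw [RTree.depth]; simp [h]

lemma RTree.depth_root {k : ℕ} (T : RTree k) (i : Fin k) (h : (i : ℕ) = 0) :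
    T.depth i = 0 := by
  rw [RTree.depth]; simp [h]

lemma RTree.mem_children_s16 {k : ℕ} (T : RTree k) (v c : Fin k) :
    c ∈ T.children v ↔ T.parent c = v ∧ c ≠ v := by
  simp [RTree.children]

lemma RTree.child_ne_zero_s16 {k : ℕ} (T : RTree k) {v c : Fin k}
    (hc : c ∈ T.children v) : (c : ℕ) ≠ 0 := by
  rw [RTree.mem_children_s16] at hc
  intro h0
  exact hc.2 (by rw [← hc.1, T.parent_root c h0])

/-- Under the Empty_Node_Selection assignment with its canonical
covering assignment `cover` (each empty odd-depth node is covered by its even-depth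
parent; each empty even-depth leaf is covered by a designated sibling leaf), a
settled agent at node `w` oscillates — i.e. covers at least one empty node — if and
only if (a) `w` is an even-depth non-leaf, or (b) `w` is an even-depth leaf with an
empty sibling leaf not covered by another agent (i.e. covered by `w`), or
(c) `w` is an odd-depth leaf with an empty sibling leaf covered by `w`. -/
theorem oscillating_settler_characterization
    {k : ℕ} (hk : 3 ≤ k) (T : RTree k) (S : Finset (Fin k))
    (h_even_nonleaf : ∀ v, T.depth v % 2 = 0 → ¬ T.isLeaf v → v ∈ S)
    (h_even_leaf_single : ∀ v, T.depth v % 2 = 0 → T.isLeaf v → (v : ℕ) ≠ 0 →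
      ((T.children (T.parent v)).filter (fun c => T.isLeaf c)).card ≤ 1 → v ∈ S)
    (h_odd_count : ∀ w, T.depth w % 2 = 0 →
      ((T.children w).filter (fun c => c ∈ S)).card =
        (if 3 < (T.children w).card then ((T.children w).card - 1) / 3 else 0))
    (h_leaf_group : ∀ w, T.depth w % 2 = 1 →
      1 < ((T.children w).filter (fun c => T.isLeaf c)).card →
      (((T.children w).filter (fun c => T.isLeaf c)).filter (fun c => c ∈ S)).card =
        (((T.children w).filter (fun c => T.isLeaf c)).card + 2) / 3)
    (cover : Fin k → Fin k)
    (hc_settled : ∀ v, v ∉ S → cover v ∈ S)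
    (hc_odd : ∀ v, v ∉ S → T.depth v % 2 = 1 → cover v = T.parent v)
    (hc_even : ∀ v, v ∉ S → T.depth v % 2 = 0 →
      T.isLeaf (cover v) ∧ T.parent (cover v) = T.parent v ∧ cover v ≠ v) :
    ∀ w ∈ S,
      ((∃ v, v ∉ S ∧ cover v = w) ↔
        (T.depth w % 2 = 0 ∧ ¬ T.isLeaf w) ∨
        (T.depth w % 2 = 0 ∧ T.isLeaf w ∧
          ∃ v, v ∉ S ∧ T.isLeaf v ∧ T.parent v = T.parent w ∧ v ≠ w ∧ cover v = w) ∨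
        (T.depth w % 2 = 1 ∧ T.isLeaf w ∧
          ∃ v, v ∉ S ∧ T.isLeaf v ∧ T.parent v = T.parent w ∧ v ≠ w ∧ cover v = w)) := by
  
  intro w hw
  constructor
  · rintro ⟨v, hvS, hcv⟩
    rcases Nat.mod_two_eq_zero_or_one (T.depth v) with hev | hod
    · -- v has even depth: sibling-leaf case
      obtain ⟨hleaf, hpar, hne⟩ := hc_even v hvS hev
      rw [hcv] at hleaf hpar hne
      have hvleaf : T.isLeaf v := by
        by_contra hnl
        exact hvS (h_even_nonleaf v hev hnl)
      by_cases h0 : (v : ℕ) = 0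
      · -- v is root, w is a child of root: odd depth
        have hpv : T.parent v = v := T.parent_root v h0
        have hw0 : (w : ℕ) ≠ 0 := by
          intro hw0
          exact hne (by rw [← T.parent_root w hw0, hpar, hpv])
        have hdw : T.depth w = T.depth v + 1 := by
          rw [T.depth_succ w hw0, hpar, hpv]
        right; right
        refine ⟨?_, hleaf, v, hvS, hvleaf, hpar.symm, fun h => hne h.symm, hcv⟩
        rw [hdw]
        omega
      · have hw0 : (w : ℕ) ≠ 0 := by
          intro hw0
          have : T.parent w = w := T.parent_root w hw0
          have hdv : T.depth v = T.depth w + 1 := by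
            rw [T.depth_succ v h0, ← hpar, this]
          rw [T.depth_root w hw0] at hdv
          omega
        have hdw : T.depth w = T.depth v := by
          rw [T.depth_succ w hw0, T.depth_succ v h0, hpar]
        right; left
        exact ⟨hdw ▸ hev, hleaf, v, hvS, hvleaf, hpar.symm, fun h => hne h.symm, hcv⟩
    · -- v has odd depth: covered by parent
      have hpv : cover v = T.parent v := hc_odd v hvS hod
      have h0 : (v : ℕ) ≠ 0 := by
        intro h0
        rw [T.depth_root v h0] at hod; omega
      have hdv : T.depth v = T.depth w + 1 := by
        rw [T.depth_succ v h0, ← hcv, hpv]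
      have hvw : v ≠ w := by
        intro h
        have := T.parent_lt v h0
        rw [← hpv, hcv, ← h] at this
        omega
      have hvc : v ∈ T.children w := by
        rw [T.mem_children_s16]
        exact ⟨by rw [← hpv, hcv], hvw⟩
      left
      refine ⟨by omega, ?_⟩
      intro hl
      rw [RTree.isLeaf] at hl
      rw [hl] at hvc
      exact absurd hvc (Finset.notMem_empty v)
  · rintro (⟨hev, hnl⟩ | ⟨_, _, v, hvS, _, _, _, hcv⟩ | ⟨_, _, v, hvS, _, _, _, hcv⟩)
    · -- even non-leaf: some child is empty
      have hne : T.children w ≠ ∅ := fun h => hnl h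
      have hcard : 0 < (T.children w).card :=
        Finset.card_pos.mpr (Finset.nonempty_of_ne_empty hne)
      have hlt : ((T.children w).filter (fun c => c ∈ S)).card < (T.children w).card := by
        rw [h_odd_count w hev]
        split_ifs with h3
        · have := Nat.div_le_self ((T.children w).card - 1) 3
          omega
        · exact hcard
      obtain ⟨c, hc, hcS⟩ : ∃ c ∈ T.children w, c ∉ S := by
        by_contra hall
        push_neg at hall
        rw [Finset.filter_eq_self.mpr hall] at hlt
        omega
      have hc0 : (c : ℕ) ≠ 0 := T.child_ne_zero_s16 hc
      rw [T.mem_children_s16] at hc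
      have hod : T.depth c % 2 = 1 := by
        rw [T.depth_succ c hc0, hc.1]
        omega
      exact ⟨c, hcS, by rw [hc_odd c hcS hod, hc.1]⟩
    · exact ⟨v, hvS, hcv⟩
    · exact ⟨v, hvS, hcv⟩
end
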